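/- arXiv:1001.3128 — 7 statements merged into one kernel-verified Lean document; each statement's English description precedes it below -/
import Mathlib

section
/- Let C₁ and C₂ be two η-prox-regular subsets of R^d, and let d_H(C₁,C₂) := sup_{y ∈ R^d} |d_{C₁}(y) - d_{C₂}(y)| denote the Hausdorff distance. Then for all x ∈ C₁, y ∈ C₂, α ∈ N(C₁,x), β ∈ N(C₂,y), one has ⟨α - β, y - x⟩ - (1/η)(|α|+|β|)|x-y|² ≤ (|α|+|β|)(d_H(C₁,C₂) + (1/η) d_H(C₁,C₂)²). -/
/-!
Prox-regularity says that `⟪v, z - x⟫ ≤ ‖v‖ / (2η) ‖z - x‖²` for every `z ∈ C` (hence every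
`z ∈ closure C`) and every proximal normal `v` at `x`. To bound `⟪a, y - x⟫` for `y ∈ C₂`, split it
through a point `z ∈ closure C₁` nearest to `y`: the part `⟪a, y - z⟫` is at most `‖a‖ d_H`, and
`‖z - x‖ ≤ d_H + ‖x - y‖` controls the prox-regular part. The symmetric bound for `⟪b, x - y⟫`
added to it gives the Vladimirov-type estimate.
-/

open Metric Set MeasureTheory
open scoped RealInnerProductSpace NNReal

def projSet {d : ℕ} (C : Set (EuclideanSpace ℝ (Fin d))) (z : EuclideanSpace ℝ (Fin d)) :
    Set (EuclideanSpace ℝ (Fin d)) :=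
  {y | y ∈ C ∧ dist z y = Metric.infDist z C}

def proxNormalCone {d : ℕ} (C : Set (EuclideanSpace ℝ (Fin d)))
    (x : EuclideanSpace ℝ (Fin d)) : Set (EuclideanSpace ℝ (Fin d)) :=
  {v | ∃ s : ℝ, 0 < s ∧ x ∈ projSet C (x + s • v)}

def IsProxRegular {d : ℕ} (η : ℝ) (C : Set (EuclideanSpace ℝ (Fin d))) : Prop :=
  ∀ x ∈ C, ∀ v ∈ proxNormalCone C x, v ≠ 0 →
    Metric.ball (x + (η / ‖v‖) • v) η ∩ C = ∅

lemma Metric.infDist_le_abs_sub_infDist_of_mem {α : Type*} [PseudoMetricSpace α] {s t : Set α}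
    {y : α} (hy : y ∈ t) : infDist y s ≤ |infDist y s - infDist y t| := by
  rw [infDist_zero_of_mem hy, sub_zero]
  exact le_abs_self _

lemma real_inner_le_of_norm_sub_ge {E : Type*} [NormedAddCommGroup E] [InnerProductSpace ℝ E]
    {η : ℝ} (hη : 0 < η) {x v z : E} (hz : η ≤ ‖z - (x + (η / ‖v‖) • v)‖) :
    ⟪v, z - x⟫ ≤ ‖v‖ / (2 * η) * ‖z - x‖ ^ 2 := by
  rcases eq_or_ne v 0 with rfl | hv
  · simp
  have hnv : 0 < ‖v‖ := norm_pos_iff.2 hv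
  set c := η / ‖v‖ with hc
  have hc_pos : 0 < c := div_pos hη hnv
  have hcv : c * ‖v‖ = η := div_mul_cancel₀ η hnv.ne'
  have hexpand : ‖z - (x + c • v)‖ ^ 2 = ‖z - x‖ ^ 2 - 2 * c * ⟪v, z - x⟫ + η ^ 2 := by
    rw [sub_add_eq_sub_sub, norm_sub_sq_real, real_inner_smul_right, norm_smul,
      Real.norm_of_nonneg hc_pos.le, real_inner_comm, ← hcv]
    ring
  have hsq : η ^ 2 ≤ ‖z - (x + c • v)‖ ^ 2 := pow_le_pow_left₀ hη.le hz 2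
  have h2c : 2 * c * ⟪v, z - x⟫ ≤ ‖z - x‖ ^ 2 := by linarith
  rw [div_mul_eq_mul_div, le_div_iff₀ (by positivity), ← hcv]
  nlinarith

lemma IsProxRegular.inner_le {d : ℕ} {η : ℝ} (hη : 0 < η) {C : Set (EuclideanSpace ℝ (Fin d))}
    (hreg : IsProxRegular η C) {x v z : EuclideanSpace ℝ (Fin d)} (hx : x ∈ C)
    (hv : v ∈ proxNormalCone C x) (hz : z ∈ closure C) :
    ⟪v, z - x⟫ ≤ ‖v‖ / (2 * η) * ‖z - x‖ ^ 2 := by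
  rcases eq_or_ne v 0 with rfl | hv0
  · simp
  refine closure_minimal (s := C) (t := {z | ⟪v, z - x⟫ ≤ ‖v‖ / (2 * η) * ‖z - x‖ ^ 2})
    (fun z hzC => ?_) (isClosed_le (by fun_prop) (by fun_prop)) hz
  refine real_inner_le_of_norm_sub_ge hη (not_lt.1 fun hlt => ?_)
  rw [← dist_eq_norm, ← mem_ball] at hlt
  exact (hreg x hx v hv hv0).subset ⟨hlt, hzC⟩

lemma IsProxRegular.inner_sub_le {d : ℕ} {η : ℝ} (hη : 0 < η)
    {C : Set (EuclideanSpace ℝ (Fin d))} (hreg : IsProxRegular η C)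
    {x a : EuclideanSpace ℝ (Fin d)} (hx : x ∈ C) (ha : a ∈ proxNormalCone C x)
    {y : EuclideanSpace ℝ (Fin d)} {D : ℝ} (hD : infDist y C ≤ D) :
    ⟪a, y - x⟫ ≤ ‖a‖ * (D + 1 / η * D ^ 2) + 1 / η * ‖a‖ * ‖x - y‖ ^ 2 := by
  obtain ⟨z, hz, hyz⟩ := isClosed_closure.exists_infDist_eq_dist ⟨x, subset_closure hx⟩ y
  rw [infDist_closure, dist_eq_norm] at hyz
  have hyz_le : ‖y - z‖ ≤ D := hyz ▸ hD
  have hzx : ‖z - x‖ ≤ D + ‖x - y‖ := by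
    calc ‖z - x‖ ≤ ‖z - y‖ + ‖y - x‖ := norm_sub_le_norm_sub_add_norm_sub z y x
      _ = ‖y - z‖ + ‖x - y‖ := by rw [norm_sub_rev z y, norm_sub_rev y x]
      _ ≤ D + ‖x - y‖ := by gcongr
  have hzx_sq : ‖z - x‖ ^ 2 ≤ 2 * D ^ 2 + 2 * ‖x - y‖ ^ 2 := by
    nlinarith [pow_le_pow_left₀ (norm_nonneg _) hzx 2, sq_nonneg (D - ‖x - y‖)]
  calc ⟪a, y - x⟫ = ⟪a, y - z⟫ + ⟪a, z - x⟫ := by rw [← inner_add_right, sub_add_sub_cancel]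
    _ ≤ ‖a‖ * ‖y - z‖ + ‖a‖ / (2 * η) * ‖z - x‖ ^ 2 :=
        add_le_add (real_inner_le_norm a _) (hreg.inner_le hη hx ha hz)
    _ ≤ ‖a‖ * D + ‖a‖ / (2 * η) * (2 * D ^ 2 + 2 * ‖x - y‖ ^ 2) := by gcongr
    _ = ‖a‖ * (D + 1 / η * D ^ 2) + 1 / η * ‖a‖ * ‖x - y‖ ^ 2 := by field_simp; ring

theorem dV_le_hausdorff_general {d : ℕ} (η : ℝ) (hη : 0 < η)
    (C₁ C₂ : Set (EuclideanSpace ℝ (Fin d)))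
    (hreg₁ : IsProxRegular η C₁) (hreg₂ : IsProxRegular η C₂)
    (hbdd : BddAbove (Set.range fun y : EuclideanSpace ℝ (Fin d) =>
      |Metric.infDist y C₁ - Metric.infDist y C₂|)) :
    ∀ x ∈ C₁, ∀ y ∈ C₂, ∀ a ∈ proxNormalCone C₁ x, ∀ b ∈ proxNormalCone C₂ y,
      ⟪a - b, y - x⟫ - (1 / η) * (‖a‖ + ‖b‖) * ‖x - y‖ ^ 2 ≤
        (‖a‖ + ‖b‖) *
          ((⨆ z : EuclideanSpace ℝ (Fin d), |Metric.infDist z C₁ - Metric.infDist z C₂|) +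
            (1 / η) * (⨆ z : EuclideanSpace ℝ (Fin d),
              |Metric.infDist z C₁ - Metric.infDist z C₂|) ^ 2) := by
  intro x hx y hy a ha b hb
  set D := ⨆ z : EuclideanSpace ℝ (Fin d), |infDist z C₁ - infDist z C₂|
  have hy₁ : infDist y C₁ ≤ D := (infDist_le_abs_sub_infDist_of_mem hy).trans (le_ciSup hbdd y)
  have hx₂ : infDist x C₂ ≤ D := by
    refine (infDist_le_abs_sub_infDist_of_mem hx).trans ?_
    rw [abs_sub_comm]
    exact le_ciSup hbdd x
  have ha_bound := hreg₁.inner_sub_le hη hx ha hy₁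
  have hb_bound := hreg₂.inner_sub_le hη hy hb hx₂
  rw [← neg_sub y x, inner_neg_right, norm_sub_rev] at hb_bound
  rw [inner_sub_left]
  linear_combination ha_bound + hb_bound

/-- Vladimirov-type estimate between normal cones of two η-prox-regular sets. -/
theorem dV_le_hausdorff {d : ℕ} (η : ℝ) (hη : 0 < η)
    (C₁ C₂ : Set (EuclideanSpace ℝ (Fin d))) (hC₁ : IsClosed C₁) (hC₂ : IsClosed C₂)
    (hne₁ : C₁.Nonempty) (hne₂ : C₂.Nonempty)
    (hreg₁ : IsProxRegular η C₁) (hreg₂ : IsProxRegular η C₂)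
    (hbdd : BddAbove (Set.range fun y : EuclideanSpace ℝ (Fin d) =>
      |Metric.infDist y C₁ - Metric.infDist y C₂|)) :
    ∀ x ∈ C₁, ∀ y ∈ C₂, ∀ a ∈ proxNormalCone C₁ x, ∀ b ∈ proxNormalCone C₂ y,
      ⟪a - b, y - x⟫ - (1 / η) * (‖a‖ + ‖b‖) * ‖x - y‖ ^ 2 ≤
        (‖a‖ + ‖b‖) *
          ((⨆ z : EuclideanSpace ℝ (Fin d), |Metric.infDist z C₁ - Metric.infDist z C₂|) +
            (1 / η) * (⨆ z : EuclideanSpace ℝ (Fin d),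
              |Metric.infDist z C₁ - Metric.infDist z C₂|) ^ 2) :=
  dV_le_hausdorff_general η hη C₁ C₂ hreg₁ hreg₂ hbdd
end

section
/- Let C₁ be an η-prox-regular closed set in R^d, take x ∈ C₁ and y ∈ R^d with a projection x̃ ∈ P_{C₁}(y) satisfying |y - x̃| ≤ d_H(C₁,C₂) for some set C₂ ∋ y. Then for any α ∈ N(C₁,x): ⟨α, y - x⟩ ≤ |α| d_H(C₁,C₂) + (1/η)|α| |x - y|² + (1/η)|α| d_H(C₁,C₂)². -/
open Metric Set MeasureTheory
open scoped RealInnerProductSpace NNReal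

/-- One-sided estimate for a proximal normal against a point of a nearby set. -/
theorem proxNormal_estimate_nearby {d : ℕ} (η D : ℝ) (hη : 0 < η)
    (C₁ : Set (EuclideanSpace ℝ (Fin d))) (hC₁ : IsClosed C₁)
    (hreg : IsProxRegular η C₁)
    (hhypo : ∀ z ∈ C₁, ∀ x ∈ C₁, ∀ a ∈ proxNormalCone C₁ x,
      ⟪a, z - x⟫ ≤ 1 / (2 * η) * ‖a‖ * ‖x - z‖ ^ 2)
    (x : EuclideanSpace ℝ (Fin d)) (hx : x ∈ C₁)
    (y xt : EuclideanSpace ℝ (Fin d)) (hxt : xt ∈ projSet C₁ y) (hclose : ‖y - xt‖ ≤ D)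
    (a : EuclideanSpace ℝ (Fin d)) (ha : a ∈ proxNormalCone C₁ x) :
    ⟪a, y - x⟫ ≤ ‖a‖ * D + (1 / η) * ‖a‖ * ‖x - y‖ ^ 2 + (1 / η) * ‖a‖ * D ^ 2 := by
  obtain ⟨hxtC, -⟩ := hxt
  have h1 : ⟪a, xt - x⟫ ≤ 1 / (2 * η) * ‖a‖ * ‖x - xt‖ ^ 2 := hhypo xt hxtC x hx a ha
  have h2 : ⟪a, y - xt⟫ ≤ ‖a‖ * D :=
    le_trans (real_inner_le_norm a (y - xt)) (by gcongr)
  have hsplit : ⟪a, y - x⟫ = ⟪a, y - xt⟫ + ⟪a, xt - x⟫ := by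
    rw [← inner_add_right]; congr 1; abel
  have hDnn : 0 ≤ D := le_trans (norm_nonneg _) hclose
  have htri : ‖x - xt‖ ≤ ‖x - y‖ + ‖y - xt‖ := norm_sub_le_norm_sub_add_norm_sub x y xt
  have hnorm : ‖x - xt‖ ^ 2 ≤ 2 * ‖x - y‖ ^ 2 + 2 * D ^ 2 := by
    nlinarith [hclose, norm_nonneg (x - xt), norm_nonneg (y - xt),
      sq_nonneg (‖x - y‖ - ‖y - xt‖), mul_self_le_mul_self (norm_nonneg (x - xt)) htri]
  have hint := mul_le_mul_of_nonneg_left hnorm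
    (by positivity : (0:ℝ) ≤ 1 / η * ‖a‖)
  have key : 1 / (2 * η) * ‖a‖ * ‖x - xt‖ ^ 2 ≤
      1 / η * ‖a‖ * ‖x - y‖ ^ 2 + 1 / η * ‖a‖ * D ^ 2 := by
    have h2 : 1 / (2 * η) * ‖a‖ * ‖x - xt‖ ^ 2 = (1 / η * ‖a‖ * ‖x - xt‖ ^ 2) / 2 := by
      rw [one_div, one_div, mul_inv]; ring
    rw [h2]; rw [mul_assoc, mul_assoc] at hint ⊢
    linarith
  linarith
end

section
/- Let C be an η-prox-regular closed set in R^d and l = η/4. Then for every ε ∈ (0, l/2), the topological boundary of C_ε := {x : d_C(x) ≤ ε} equals {x ∈ R^d : d_C(x) = ε}. -/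
/-!
Points of `C_ε` are within `ε` of `C`, and `{d_C < ε}` is open, so the boundary lies in
`{d_C = ε}`. Conversely, let `d_C(x) = ε` with nearest point `x₀ ∈ C` and unit normal
`u = (x - x₀)/ε`. Prox-regularity says the ball of radius `η` centred at `x₀ + η u` misses `C`,
so along the normal ray `d_C(x₀ + t u) ≥ t` for `t ≤ η`. Since `ε < η`, the points `x₀ + t u`
with `t ↓ ε` lie outside `C_ε` and converge to `x`.
-/

open Metric Set MeasureTheory
open scoped RealInnerProductSpace NNReal

open Filter Topology

theorem le_infDist_add_smul_of_ball_inter_eq_empty {E : Type*} [NormedAddCommGroup E]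
    [NormedSpace ℝ E] {C : Set E} (hC : C.Nonempty) {x₀ u : E} (hu : ‖u‖ = 1) {η t : ℝ}
    (hball : ball (x₀ + η • u) η ∩ C = ∅) (ht : t ≤ η) :
    t ≤ infDist (x₀ + t • u) C := by
  have hcentre : dist (x₀ + t • u) (x₀ + η • u) = η - t := by
    rw [dist_add_left, dist_eq_norm, ← sub_smul, norm_smul, hu, mul_one, Real.norm_eq_abs,
      abs_of_nonpos (by linarith)]
    ring
  refine (le_infDist hC).2 fun z hz => ?_
  have hfar : η ≤ dist z (x₀ + η • u) :=
    not_lt.1 fun h => (eq_empty_iff_forall_notMem.1 hball) z ⟨h, hz⟩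
  linarith [dist_triangle z (x₀ + t • u) (x₀ + η • u), dist_comm z (x₀ + t • u)]

theorem IsProxRegular.mem_closure_infDist_gt {d : ℕ} {η ε : ℝ}
    {C : Set (EuclideanSpace ℝ (Fin d))} (hreg : IsProxRegular η C) (hC : IsClosed C)
    {x : EuclideanSpace ℝ (Fin d)} (hx : infDist x C = ε) (hε : 0 < ε) (hεη : ε < η) :
    x ∈ closure {y | ε < infDist y C} := by
  have hCne : C.Nonempty := nonempty_iff_ne_empty.2 fun h => by
    rw [h, infDist_empty] at hx
    exact hε.ne hx
  obtain ⟨x₀, hx₀C, hx₀⟩ := hC.exists_infDist_eq_dist hCne x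
  set v := x - x₀
  have hv : ‖v‖ = ε := by rw [← dist_eq_norm, ← hx₀, hx]
  have hvC : v ∈ proxNormalCone C x₀ :=
    ⟨1, one_pos, hx₀C, by rw [one_smul, add_sub_cancel, hx₀, dist_comm]⟩
  have hball := hreg x₀ hx₀C v hvC (norm_pos_iff.1 (hv ▸ hε))
  set u := ε⁻¹ • v
  have hu : ‖u‖ = 1 := by
    rw [norm_smul, hv, norm_inv, Real.norm_of_nonneg hε.le, inv_mul_cancel₀ hε.ne']
  have hηu : (η / ‖v‖) • v = η • u := by rw [smul_smul, hv, div_eq_mul_inv]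
  rw [hηu] at hball
  have hray : Tendsto (fun t : ℝ => x₀ + t • u) (𝓝[>] ε) (𝓝 x) := by
    have hxu : x = x₀ + ε • u := by
      rw [smul_smul, mul_inv_cancel₀ hε.ne', one_smul, add_sub_cancel]
    rw [hxu]
    exact ((continuous_const.add (continuous_id.smul continuous_const)).tendsto ε).mono_left
      nhdsWithin_le_nhds
  refine mem_closure_of_tendsto hray ?_
  filter_upwards [Ioo_mem_nhdsGT hεη] with t ht
  exact ht.1.trans_le (le_infDist_add_smul_of_ball_inter_eq_empty hCne hu hball ht.2.le)

theorem frontier_enlargement_general {d : ℕ} (η : ℝ)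
    (C : Set (EuclideanSpace ℝ (Fin d))) (hC : IsClosed C) (hreg : IsProxRegular η C)
    (ε : ℝ) (hε : ε ∈ Set.Ioo 0 (η / 4 / 2)) :
    frontier {x : EuclideanSpace ℝ (Fin d) | Metric.infDist x C ≤ ε} =
      {x : EuclideanSpace ℝ (Fin d) | Metric.infDist x C = ε} := by
  refine (frontier_le_subset_eq (continuous_infDist_pt C) continuous_const).antisymm
    fun x hx => ?_
  rw [frontier_eq_closure_inter_closure]
  refine ⟨subset_closure hx.le, closure_mono (fun y (hy : ε < infDist y C) => not_le.2 hy) ?_⟩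
  exact hreg.mem_closure_infDist_gt hC hx hε.1 (by linarith [hε.1, hε.2])

/-- The boundary of the ε-enlargement of an η-prox-regular set is the ε-level set of d_C. -/
theorem frontier_enlargement {d : ℕ} (η : ℝ) (hη : 0 < η)
    (C : Set (EuclideanSpace ℝ (Fin d))) (hC : IsClosed C) (hreg : IsProxRegular η C)
    (ε : ℝ) (hε : ε ∈ Set.Ioo 0 (η / 4 / 2)) :
    frontier {x : EuclideanSpace ℝ (Fin d) | Metric.infDist x C ≤ ε} =
      {x : EuclideanSpace ℝ (Fin d) | Metric.infDist x C = ε} :=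
  frontier_enlargement_general η C hC hreg ε hε
end

section
/- Let C be an η-prox-regular closed set in R^d. Then for every ε < η/8, the enlargement C_ε := C + ε B̄ = {x : d_C(x) ≤ ε} is (η/8)-prox-regular. -/
open Metric Set MeasureTheory
open scoped RealInnerProductSpace NNReal

/-! If `x` is a nearest point of `C_ε` to `z ∉ C_ε`, then `d_C(z) = d_{C_ε}(z) + ε`, so a nearest
point `p` of `C` to `x` gives equality in `|z - p| ≤ |z - x| + |x - p|`. By strict convexity `x`
lies on the segment `[p, z]` at distance `ε` from `p`: a proximal normal `v` to `C_ε` at `x` is a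
proximal normal to `C` at `p = x - ε v / |v|`. The ball of radius `η - ε` at `x` in direction `v`
is the ball of radius `η` at `p` shrunk by `ε`, hence misses `C_ε`; so `C_ε` is
`(η - ε)`-prox-regular, and `η / 8 ≤ η - ε`. -/

def enlargement {E : Type*} [PseudoMetricSpace E] (C : Set E) (ε : ℝ) : Set E :=
  {x | infDist x C ≤ ε}

theorem enlargement_eq_cthickening {E : Type*} [PseudoMetricSpace E] {C : Set E} {ε : ℝ}
    (hC : C.Nonempty) (hε : 0 ≤ ε) : enlargement C ε = cthickening ε C := by
  ext x
  rw [mem_cthickening_iff, ENNReal.le_ofReal_iff_toReal_le (infEDist_ne_top hC) hε]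
  rfl

theorem infDist_enlargement_add {E : Type*} [NormedAddCommGroup E] [NormedSpace ℝ E] {C : Set E}
    {ε : ℝ} (hC : C.Nonempty) (hε : 0 ≤ ε) {z : E} (hz : ε ≤ infDist z C) :
    infDist z (enlargement C ε) + ε = infDist z C := by
  have hz' : ENNReal.ofReal ε ≤ infEDist z C :=
    (ENNReal.ofReal_le_iff_le_toReal (infEDist_ne_top hC)).2 hz
  rw [enlargement_eq_cthickening hC hε, infDist, infEDist_cthickening,
    ENNReal.toReal_sub_of_le hz' (infEDist_ne_top hC), ENNReal.toReal_ofReal hε]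
  exact sub_add_cancel _ _

theorem dist_add_div_norm_smul_add_div_norm_smul {E : Type*} [NormedAddCommGroup E]
    [NormedSpace ℝ E] (x : E) {v : E} (hv : v ≠ 0) (a b : ℝ) :
    dist (x + (a / ‖v‖) • v) (x + (b / ‖v‖) • v) = |a - b| := by
  rw [dist_add_left, dist_eq_norm, ← sub_smul, norm_smul, ← sub_div, Real.norm_eq_abs, abs_div,
    abs_norm, div_mul_cancel₀ _ (norm_ne_zero_iff.2 hv)]

section Euclidean

variable {d : ℕ} {C : Set (EuclideanSpace ℝ (Fin d))} {η ε : ℝ}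

theorem IsProxRegular.mono {r : ℝ} (hC : IsProxRegular η C) (hr : r ≤ η) : IsProxRegular r C := by
  intro x hx v hv hv0
  refine eq_empty_of_subset_empty (hC x hx v hv hv0 ▸ inter_subset_inter_left C ?_)
  refine ball_subset_ball' ?_
  rw [dist_add_div_norm_smul_add_div_norm_smul x hv0, abs_of_nonpos (by linarith)]
  linarith

theorem proxNormalCone_enlargement {x v : EuclideanSpace ℝ (Fin d)} (hC : IsClosed C)
    (hv : v ∈ proxNormalCone (enlargement C ε) x) (hv0 : v ≠ 0) :
    x - (ε / ‖v‖) • v ∈ C ∧ v ∈ proxNormalCone C (x - (ε / ‖v‖) • v) := by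
  obtain ⟨s, hs, hxε, hproj⟩ := hv
  set z := x + s • v
  have hε : 0 ≤ ε := infDist_nonneg.trans hxε
  have hzx : dist z x = s * ‖v‖ := by
    rw [dist_eq_norm, add_sub_cancel_left, norm_smul, Real.norm_of_nonneg hs.le]
  have hzx_pos : 0 < dist z x := hzx ▸ mul_pos hs (norm_pos_iff.2 hv0)
  have hz : ε < infDist z C := not_le.1 fun hz ↦
    (hproj ▸ hzx_pos).ne' (infDist_zero_of_mem hz)
  have hCne : C.Nonempty := nonempty_iff_ne_empty.2 fun h ↦ by
    rw [h, infDist_empty] at hz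
    linarith
  have hzC : infDist z C = dist z x + ε := by
    rw [← infDist_enlargement_add hCne hε hz.le, hproj]
  obtain ⟨p, hpC, hxp⟩ := hC.exists_infDist_eq_dist hCne x
  have hzp_le : infDist z C ≤ dist z p := infDist_le_dist_of_mem hpC
  have htri := dist_triangle z x p
  have hxp_eq : dist x p = ε := by linarith [show infDist x C ≤ ε from hxε]
  have hray : SameRay ℝ (z - x) (x - p) := by
    rw [sameRay_iff_norm_add, sub_add_sub_cancel, ← dist_eq_norm, ← dist_eq_norm,
      ← dist_eq_norm]
    linarith
  have hp : p = x - (ε / ‖v‖) • v := by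
    have h := hray.norm_smul_eq
    rw [← dist_eq_norm, ← dist_eq_norm, hzx, hxp_eq, add_sub_cancel_left, smul_smul] at h
    have hxp_vec : x - p = (ε / ‖v‖) • v := by
      rw [← inv_smul_smul₀ (hzx ▸ hzx_pos).ne' (x - p), h, smul_smul]
      congr 1
      field_simp
    rw [← hxp_vec, sub_sub_cancel]
  subst hp
  refine ⟨hpC, s + ε / ‖v‖, by positivity, hpC, ?_⟩
  have hz' : x - (ε / ‖v‖) • v + (s + ε / ‖v‖) • v = z := by
    rw [add_smul, sub_add_add_cancel]
  rw [hz']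
  linarith

theorem IsProxRegular.enlargement (hC : IsClosed C) (hreg : IsProxRegular η C) :
    IsProxRegular (η - ε) (enlargement C ε) := by
  intro x _ v hv hv0
  obtain ⟨hpC, hpv⟩ := proxNormalCone_enlargement hC hv hv0
  set p := x - (ε / ‖v‖) • v
  set a := p + (η / ‖v‖) • v
  have hcenter : x + ((η - ε) / ‖v‖) • v = a := by
    simp only [a, p, sub_div, sub_smul]
    abel
  have hball := hreg p hpC v hpv hv0
  have ha : η ≤ infDist a C := (le_infDist ⟨p, hpC⟩).2 fun c hc ↦
    not_lt.1 fun h ↦ hball.subset ⟨mem_ball'.2 h, hc⟩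
  refine eq_empty_iff_forall_notMem.2 fun y ⟨hy, hyε⟩ ↦ ?_
  rw [hcenter, mem_ball'] at hy
  linarith [infDist_le_infDist_add_dist (s := C) (x := a) (y := y), show infDist y C ≤ ε from hyε]

end Euclidean

/-- The ε-enlargement of an η-prox-regular set is (η/8)-prox-regular for ε < η/8. -/
theorem enlargement_proxRegular {d : ℕ} (η : ℝ) (hη : 0 < η)
    (C : Set (EuclideanSpace ℝ (Fin d))) (hC : IsClosed C) (hreg : IsProxRegular η C)
    (ε : ℝ) (hε : ε < η / 8) :
    IsProxRegular (η / 8) {x : EuclideanSpace ℝ (Fin d) | Metric.infDist x C ≤ ε} :=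
  (hreg.enlargement (ε := ε) hC).mono (by linarith)
end

section
/- Let z: [0,T] → R^d be continuous with z(0) = 0 and dz = -dk + dk̃ where k, k̃ are continuous BV functions such that for a.e. t (w.r.t. d|k|, d|k̃|) the densities dk(t) ∈ N(C(t), x(t)) and dk̃(t) ∈ N(C(t), x̃(t)) with x, x̃ ∈ C(t) and z = x - x̃, each C(t) being η-prox-regular. Then e(t) := |z(t)|² satisfies de(t) ≤ (e(t)/(2η)) (d|k|(t) + d|k̃|(t)) as measures, and consequently e ≡ 0. -/
open Metric Set MeasureTheory
open scoped RealInnerProductSpace NNReal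

/-!
Prox-regularity makes proximal normals hypomonotone: `⟪v, y - x⟫ ≤ ‖v‖ / (2η) ‖y - x‖²` whenever
`v` is a proximal normal at `x` and `y ∈ C`. Because `z` is continuous, summing
`‖z t‖² - ‖z s‖² = ⟪z t + z s, z t - z s⟫` over fine partitions yields the chain rule
`d‖z‖² = 2⟪z, dz⟫` up to an error that vanishes with the mesh, and hypomonotonicity turns it into
`‖z t‖² - ‖z s‖² ≤ η⁻¹ ∫ₛᵗ ‖z‖² (‖ξ‖ dμ + ‖ξ'‖ dμ')`. Right after a zero `x` of `z`, on an interval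
carrying total variation at most `η / 2`, this inequality at a maximum point of `‖z‖²` forces the
maximum to be at most half of itself. So the zero set of `z` in `[0, T]` is closed, contains `0`
and is a right neighbourhood of each of its points below `T`: it is all of `[0, T]`, and the
integrated energy inequality holds with left-hand side `0`.
-/

open Filter Topology

theorem inner_le_of_mem_proxNormalCone {d : ℕ} {η : ℝ} (hη : 0 < η)
    {C : Set (EuclideanSpace ℝ (Fin d))} (hC : IsProxRegular η C)
    {x y v : EuclideanSpace ℝ (Fin d)} (hx : x ∈ C) (hy : y ∈ C)
    (hv : v ∈ proxNormalCone C x) :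
    ⟪v, y - x⟫ ≤ ‖v‖ / (2 * η) * ‖y - x‖ ^ 2 := by
  rcases eq_or_ne v 0 with rfl | hv0
  · simp
  have hvpos : 0 < ‖v‖ := norm_pos_iff.mpr hv0
  have hfar : η ≤ ‖(y - x) - (η / ‖v‖) • v‖ := by
    have hout : y ∉ ball (x + (η / ‖v‖) • v) η := fun hball =>
      (hC x hx v hv hv0).subset ⟨hball, hy⟩
    rw [mem_ball, not_lt, dist_eq_norm, sub_add_eq_sub_sub] at hout
    exact hout
  have hexp : ‖(y - x) - (η / ‖v‖) • v‖ ^ 2 =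
      ‖y - x‖ ^ 2 - 2 * (η / ‖v‖) * ⟪v, y - x⟫ + η ^ 2 := by
    rw [norm_sub_sq_real, real_inner_smul_right, norm_smul, Real.norm_of_nonneg (by positivity),
      real_inner_comm]
    field_simp
  have hkey : 2 * (η / ‖v‖) * ⟪v, y - x⟫ ≤ ‖y - x‖ ^ 2 := by
    nlinarith [pow_le_pow_left₀ hη.le hfar 2]
  calc ⟪v, y - x⟫ = ‖v‖ / (2 * η) * (2 * (η / ‖v‖) * ⟪v, y - x⟫) := by field_simp
    _ ≤ ‖v‖ / (2 * η) * ‖y - x‖ ^ 2 := by gcongr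

theorem setIntegral_Icc_sub_setIntegral_Icc {F : Type*} [NormedAddCommGroup F] [NormedSpace ℝ F]
    {ν : Measure ℝ} {f : ℝ → F} {a s t : ℝ} (hf : IntegrableOn f (Icc a t) ν)
    (has : a ≤ s) (hst : s ≤ t) :
    ∫ r in Icc a t, f r ∂ν - ∫ r in Icc a s, f r ∂ν = ∫ r in s..t, f r ∂ν := by
  rw [← Icc_union_Ioc_eq_Icc has hst] at hf ⊢
  rw [setIntegral_union ((Iic_disjoint_Ioc le_rfl).mono_left Icc_subset_Iic_self) measurableSet_Ioc
    (hf.mono_set subset_union_left) (hf.mono_set subset_union_right),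
    intervalIntegral.integral_of_le hst, add_sub_cancel_left]

theorem MeasureTheory.IntegrableOn.intervalIntegrable_of_mem_Icc {F : Type*}
    [NormedAddCommGroup F] {ν : Measure ℝ} {f : ℝ → F} {a b s t : ℝ}
    (hf : IntegrableOn f (Icc a b) ν) (hs : s ∈ Icc a b) (ht : t ∈ Icc a b) :
    IntervalIntegrable f ν s t :=
  (hf.mono_set (uIcc_subset_Icc hs ht)).intervalIntegrable

theorem integrableOn_sq_norm_mul_norm {F G : Type*} [NormedAddCommGroup F] [NormedAddCommGroup G]
    {ν : Measure ℝ} {z : ℝ → F} {ζ : ℝ → G} {a b : ℝ} (hzc : ContinuousOn z (Icc a b))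
    (hζ : IntegrableOn ζ (Icc a b) ν) :
    IntegrableOn (fun r => ‖z r‖ ^ 2 * ‖ζ r‖) (Icc a b) ν :=
  IntegrableOn.continuousOn_mul (hzc.norm.pow 2) hζ.norm isCompact_Icc

theorem sub_eq_intervalIntegral_add {F : Type*} [NormedAddCommGroup F] [NormedSpace ℝ F]
    {μ μ' : Measure ℝ} {ζ ζ' z : ℝ → F} {a b s t : ℝ} (hζ : IntegrableOn ζ (Icc a b) μ)
    (hζ' : IntegrableOn ζ' (Icc a b) μ')
    (hz : ∀ t ∈ Icc a b, z t = z a + (∫ r in a..t, ζ r ∂μ) + ∫ r in a..t, ζ' r ∂μ')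
    (hs : s ∈ Icc a b) (ht : t ∈ Icc a b) :
    z t - z s = (∫ r in s..t, ζ r ∂μ) + ∫ r in s..t, ζ' r ∂μ' := by
  have ha : a ∈ Icc a b := left_mem_Icc.mpr (hs.1.trans hs.2)
  rw [hz t ht, hz s hs,
    ← intervalIntegral.integral_interval_sub_left (hζ.intervalIntegrable_of_mem_Icc ha ht)
      (hζ.intervalIntegrable_of_mem_Icc ha hs),
    ← intervalIntegral.integral_interval_sub_left (hζ'.intervalIntegrable_of_mem_Icc ha ht)
      (hζ'.intervalIntegrable_of_mem_Icc ha hs)]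
  abel

theorem intervalIntegral_mul_le_mul_intervalIntegral {ν : Measure ℝ} {f w : ℝ → ℝ}
    {M x t y : ℝ} (hxt : x ≤ t) (hty : t ≤ y) (hfw : IntervalIntegrable (fun r => f r * w r) ν x t)
    (hw : IntervalIntegrable w ν x y) (hw0 : ∀ r, 0 ≤ w r) (hM0 : 0 ≤ M)
    (hM : ∀ r ∈ Icc x y, f r ≤ M) :
    ∫ r in x..t, f r * w r ∂ν ≤ M * ∫ r in x..y, w r ∂ν := by
  have hwt : IntervalIntegrable w ν x t := hw.mono_set (uIcc_subset_uIcc_left (by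
    rw [uIcc_of_le (hxt.trans hty)]; exact ⟨hxt, hty⟩))
  calc ∫ r in x..t, f r * w r ∂ν ≤ ∫ r in x..t, M * w r ∂ν :=
        intervalIntegral.integral_mono_on hxt hfw (hwt.const_mul M) fun r hr =>
          mul_le_mul_of_nonneg_right (hM r ⟨hr.1, hr.2.trans hty⟩) (hw0 r)
    _ = M * ∫ r in x..t, w r ∂ν := intervalIntegral.integral_const_mul M w
    _ ≤ M * ∫ r in x..y, w r ∂ν := mul_le_mul_of_nonneg_left
        (intervalIntegral.integral_mono_interval le_rfl hxt hty (ae_of_all _ hw0) hw) hM0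

theorem tendsto_intervalIntegral_shrink {F : Type*} [NormedAddCommGroup F] [NormedSpace ℝ F]
    {ν : Measure ℝ} {f : ℝ → F} {x b : ℝ} (hxb : x ≤ b) (hf : IntegrableOn f (Ioc x b) ν) :
    Tendsto (fun n : ℕ => ∫ r in x..x + (b - x) / (n + 1), f r ∂ν) atTop (𝓝 0) := by
  have hanti : Antitone fun n : ℕ => Ioc x (x + (b - x) / (n + 1)) := fun m n hmn =>
    Ioc_subset_Ioc_right (by gcongr)
  have hempty : ⋂ n : ℕ, Ioc x (x + (b - x) / (n + 1)) = ∅ := by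
    refine eq_empty_of_forall_notMem fun r hr => ?_
    rw [mem_iInter] at hr
    have hxr : 0 < r - x := sub_pos.mpr (hr 0).1
    obtain ⟨n, hn⟩ := exists_nat_gt ((b - x) / (r - x))
    have hr_le := (hr n).2
    rw [div_lt_iff₀ hxr] at hn
    rw [← sub_le_iff_le_add', le_div_iff₀ (by positivity)] at hr_le
    nlinarith
  have hlim := hanti.tendsto_setIntegral (fun _ => measurableSet_Ioc) (by simpa using hf)
  rw [hempty, Measure.restrict_empty, integral_zero_measure] at hlim
  refine hlim.congr fun n => (intervalIntegral.integral_of_le ?_).symm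
  have : 0 ≤ (b - x) / (n + 1) := div_nonneg (sub_nonneg.mpr hxb) (by positivity)
  linarith

theorem exists_monotone_partition {s t δ : ℝ} (hst : s ≤ t) (hδ : 0 < δ) :
    ∃ (p : ℕ → ℝ) (n : ℕ), Monotone p ∧ p 0 = s ∧ p n = t ∧ (∀ i, p i ∈ Icc s t) ∧
      ∀ i, p (i + 1) - p i < δ := by
  refine ⟨fun i => min (s + i * (δ / 2)) t, ⌈(t - s) / (δ / 2)⌉₊, fun i j hij => ?_,
    by simp [hst], ?_, fun i => ⟨le_min ?_ hst, min_le_right _ _⟩, fun i => ?_⟩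
  · dsimp only
    gcongr
  · refine min_eq_right ?_
    have := Nat.le_ceil ((t - s) / (δ / 2))
    rw [div_le_iff₀ (by positivity)] at this
    linarith
  · have : 0 ≤ (i : ℝ) * (δ / 2) := by positivity
    linarith
  · have h : min (s + (i + 1 : ℕ) * (δ / 2)) t ≤ min (s + i * (δ / 2) + δ / 2) (t + δ / 2) :=
      min_le_min (by push_cast; linarith) (by linarith)
    rw [min_add_add_right] at h
    dsimp only
    linarith

theorem exists_partition_norm_le {F : Type*} [NormedAddCommGroup F] {z : ℝ → F} {a b s t ω : ℝ}
    (hzc : ContinuousOn z (Icc a b)) (hω : 0 < ω)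
    (has : a ≤ s) (hst : s ≤ t) (htb : t ≤ b) :
    ∃ (p : ℕ → ℝ) (n : ℕ), Monotone p ∧ p 0 = s ∧ p n = t ∧ (∀ i, p i ∈ Icc a b) ∧
      ∀ i, ∀ r ∈ Ioc (p i) (p (i + 1)), ‖z (p (i + 1)) - z r + (z (p i) - z r)‖ ≤ ω := by
  obtain ⟨δ, hδ, hδz⟩ := Metric.uniformContinuousOn_iff.mp
    (isCompact_Icc.uniformContinuousOn_of_continuous hzc) (ω / 2) (by positivity)
  obtain ⟨p, n, hp, hp0, hpn, hpI, hpδ⟩ := exists_monotone_partition hst hδ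
  have hpI' : ∀ i, p i ∈ Icc a b := fun i => Icc_subset_Icc has htb (hpI i)
  refine ⟨p, n, hp, hp0, hpn, hpI', fun i r hr => ?_⟩
  have hrI : r ∈ Icc a b := Icc_subset_Icc (hpI' i).1 (hpI' (i + 1)).2 (Ioc_subset_Icc_self hr)
  have h1 : dist (z (p (i + 1))) (z r) < ω / 2 := hδz _ (hpI' _) r hrI <| by
    rw [Real.dist_eq, abs_of_nonneg (by linarith [hr.2])]
    linarith [hpδ i, hr.1]
  have h2 : dist (z (p i)) (z r) < ω / 2 := hδz _ (hpI' _) r hrI <| by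
    rw [Real.dist_eq, abs_of_nonpos (by linarith [hr.1])]
    linarith [hpδ i, hr.2]
  rw [dist_eq_norm] at h1 h2
  linarith [norm_add_le (z (p (i + 1)) - z r) (z (p i) - z r)]

section

variable {E : Type*} [NormedAddCommGroup E] [InnerProductSpace ℝ E] [CompleteSpace E]
  {μ μ' : Measure ℝ} {ζ ζ' z : ℝ → E} {η ω a b s t : ℝ}

theorem inner_add_intervalIntegral_le (hst : s ≤ t) (hζ : IntervalIntegrable ζ μ s t)
    (hg : IntervalIntegrable (fun r => ‖z r‖ ^ 2 * ‖ζ r‖) μ s t)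
    (hmono : ∀ᵐ r ∂μ, r ∈ Ioc s t → ⟪ζ r, z r⟫ ≤ ‖ζ r‖ / (2 * η) * ‖z r‖ ^ 2)
    (hosc : ∀ r ∈ Ioc s t, ‖z t - z r + (z s - z r)‖ ≤ ω) :
    ⟪z t + z s, ∫ r in s..t, ζ r ∂μ⟫ ≤
      (∫ r in s..t, ‖z r‖ ^ 2 * ‖ζ r‖ ∂μ) / η + ω * ∫ r in s..t, ‖ζ r‖ ∂μ := by
  simp only [intervalIntegral.integral_of_le hst]
  rw [← integral_inner hζ.1, ← integral_div, ← integral_const_mul,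
    ← integral_add (hg.1.div_const η) (hζ.1.norm.const_mul ω)]
  refine setIntegral_mono_ae_restrict (hζ.1.const_inner _)
    ((hg.1.div_const η).add (hζ.1.norm.const_mul ω)) ?_
  filter_upwards [ae_restrict_mem measurableSet_Ioc, ae_restrict_of_ae hmono] with r hr hmono_r
  have hsplit : z t + z s = (2 : ℝ) • z r + (z t - z r + (z s - z r)) := by module
  calc ⟪z t + z s, ζ r⟫ = 2 * ⟪ζ r, z r⟫ + ⟪z t - z r + (z s - z r), ζ r⟫ := by
        rw [hsplit, inner_add_left, real_inner_smul_left, real_inner_comm]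
    _ ≤ 2 * (‖ζ r‖ / (2 * η) * ‖z r‖ ^ 2) + ω * ‖ζ r‖ := by
        gcongr
        · exact hmono_r hr
        · exact (real_inner_le_norm _ _).trans
            (mul_le_mul_of_nonneg_right (hosc r hr) (norm_nonneg _))
    _ = ‖z r‖ ^ 2 * ‖ζ r‖ / η + ω * ‖ζ r‖ := by ring

theorem sum_inner_add_intervalIntegral_le {p : ℕ → ℝ} (hp : Monotone p) {n : ℕ}
    (hζ : IntervalIntegrable ζ μ (p 0) (p n))
    (hg : IntervalIntegrable (fun r => ‖z r‖ ^ 2 * ‖ζ r‖) μ (p 0) (p n))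
    (hmono : ∀ᵐ r ∂μ, r ∈ Ioc (p 0) (p n) → ⟪ζ r, z r⟫ ≤ ‖ζ r‖ / (2 * η) * ‖z r‖ ^ 2)
    (hosc : ∀ i < n, ∀ r ∈ Ioc (p i) (p (i + 1)),
      ‖z (p (i + 1)) - z r + (z (p i) - z r)‖ ≤ ω) :
    ∑ i ∈ Finset.range n, ⟪z (p (i + 1)) + z (p i), ∫ r in p i..p (i + 1), ζ r ∂μ⟫ ≤
      (∫ r in p 0..p n, ‖z r‖ ^ 2 * ‖ζ r‖ ∂μ) / η + ω * ∫ r in p 0..p n, ‖ζ r‖ ∂μ := by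
  have hstep : ∀ i < n, uIcc (p i) (p (i + 1)) ⊆ uIcc (p 0) (p n) := fun i hi => by
    rw [uIcc_of_le (hp i.le_succ), uIcc_of_le (hp (Nat.zero_le n))]
    exact Icc_subset_Icc (hp (Nat.zero_le i)) (hp hi)
  calc _ ≤ ∑ i ∈ Finset.range n, ((∫ r in p i..p (i + 1), ‖z r‖ ^ 2 * ‖ζ r‖ ∂μ) / η +
          ω * ∫ r in p i..p (i + 1), ‖ζ r‖ ∂μ) := by
        refine Finset.sum_le_sum fun i hi => ?_
        have hi := Finset.mem_range.mp hi
        refine inner_add_intervalIntegral_le (hp i.le_succ) (hζ.mono_set (hstep i hi))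
          (hg.mono_set (hstep i hi)) ?_ (hosc i hi)
        filter_upwards [hmono] with r hr hri
        exact hr (Ioc_subset_Ioc (hp (Nat.zero_le i)) (hp hi) hri)
    _ = _ := by
        rw [Finset.sum_add_distrib, ← Finset.sum_div, ← Finset.mul_sum,
          intervalIntegral.sum_integral_adjacent_intervals fun i hi => hg.mono_set (hstep i hi),
          intervalIntegral.sum_integral_adjacent_intervals fun i hi =>
            hζ.norm.mono_set (hstep i hi)]

theorem sq_norm_sub_sq_norm_le (hzc : ContinuousOn z (Icc a b))
    (hζ : IntegrableOn ζ (Icc a b) μ) (hζ' : IntegrableOn ζ' (Icc a b) μ')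
    (hmono : ∀ᵐ r ∂μ, r ∈ Icc a b → ⟪ζ r, z r⟫ ≤ ‖ζ r‖ / (2 * η) * ‖z r‖ ^ 2)
    (hmono' : ∀ᵐ r ∂μ', r ∈ Icc a b → ⟪ζ' r, z r⟫ ≤ ‖ζ' r‖ / (2 * η) * ‖z r‖ ^ 2)
    (hz : ∀ t ∈ Icc a b, z t = z a + (∫ r in a..t, ζ r ∂μ) + ∫ r in a..t, ζ' r ∂μ')
    (has : a ≤ s) (hst : s ≤ t) (htb : t ≤ b) :
    ‖z t‖ ^ 2 - ‖z s‖ ^ 2 ≤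
      ((∫ r in s..t, ‖z r‖ ^ 2 * ‖ζ r‖ ∂μ) + ∫ r in s..t, ‖z r‖ ^ 2 * ‖ζ' r‖ ∂μ') / η := by
  set K := (∫ r in s..t, ‖ζ r‖ ∂μ) + ∫ r in s..t, ‖ζ' r‖ ∂μ'
  have hK : 0 ≤ K := add_nonneg (intervalIntegral.integral_nonneg hst fun _ _ => norm_nonneg _)
    (intervalIntegral.integral_nonneg hst fun _ _ => norm_nonneg _)
  have hsI : s ∈ Icc a b := ⟨has, hst.trans htb⟩
  have htI : t ∈ Icc a b := ⟨has.trans hst, htb⟩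
  have hg := integrableOn_sq_norm_mul_norm hzc hζ
  have hg' := integrableOn_sq_norm_mul_norm hzc hζ'
  refine le_of_forall_pos_le_add fun ε hε => ?_
  -- oscillation `ε / (K + 1)` on every cell keeps the total error below `ε`
  obtain ⟨p, n, hp, rfl, rfl, hpI, hosc⟩ :=
    exists_partition_norm_le hzc (ω := ε / (K + 1)) (by positivity) has hst htb
  have hsub : Ioc (p 0) (p n) ⊆ Icc a b := Ioc_subset_Icc_self.trans (Icc_subset_Icc has htb)
  calc ‖z (p n)‖ ^ 2 - ‖z (p 0)‖ ^ 2
      = ∑ i ∈ Finset.range n, ⟪z (p (i + 1)) + z (p i), z (p (i + 1)) - z (p i)⟫ := by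
        rw [← Finset.sum_range_sub (fun i => ‖z (p i)‖ ^ 2)]
        refine Finset.sum_congr rfl fun i _ => ?_
        rw [inner_add_left, inner_sub_right, inner_sub_right, real_inner_self_eq_norm_sq,
          real_inner_self_eq_norm_sq, real_inner_comm]
        ring
    _ = ∑ i ∈ Finset.range n, ⟪z (p (i + 1)) + z (p i), ∫ r in p i..p (i + 1), ζ r ∂μ⟫ +
          ∑ i ∈ Finset.range n, ⟪z (p (i + 1)) + z (p i), ∫ r in p i..p (i + 1), ζ' r ∂μ'⟫ := by
        rw [← Finset.sum_add_distrib]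
        refine Finset.sum_congr rfl fun i _ => ?_
        rw [sub_eq_intervalIntegral_add hζ hζ' hz (hpI i) (hpI (i + 1)), inner_add_right]
    _ ≤ ((∫ r in p 0..p n, ‖z r‖ ^ 2 * ‖ζ r‖ ∂μ) / η + ε / (K + 1) * ∫ r in p 0..p n, ‖ζ r‖ ∂μ) +
          ((∫ r in p 0..p n, ‖z r‖ ^ 2 * ‖ζ' r‖ ∂μ') / η +
            ε / (K + 1) * ∫ r in p 0..p n, ‖ζ' r‖ ∂μ') := by
        gcongr
        · exact sum_inner_add_intervalIntegral_le hp (hζ.intervalIntegrable_of_mem_Icc hsI htI)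
            (hg.intervalIntegrable_of_mem_Icc hsI htI)
            (by filter_upwards [hmono] with r hr hri using hr (hsub hri)) fun i _ => hosc i
        · exact sum_inner_add_intervalIntegral_le hp (hζ'.intervalIntegrable_of_mem_Icc hsI htI)
            (hg'.intervalIntegrable_of_mem_Icc hsI htI)
            (by filter_upwards [hmono'] with r hr hri using hr (hsub hri)) fun i _ => hosc i
    _ ≤ _ := by
        have : ε / (K + 1) * K ≤ ε := by
          rw [div_mul_eq_mul_div, div_le_iff₀ (by positivity)]
          nlinarith
        rw [add_div]
        linarith

theorem eqOn_zero_of_intervalIntegral_norm_le (hη : 0 < η) (hzc : ContinuousOn z (Icc a b))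
    (hζ : IntegrableOn ζ (Icc a b) μ) (hζ' : IntegrableOn ζ' (Icc a b) μ')
    (hmono : ∀ᵐ r ∂μ, r ∈ Icc a b → ⟪ζ r, z r⟫ ≤ ‖ζ r‖ / (2 * η) * ‖z r‖ ^ 2)
    (hmono' : ∀ᵐ r ∂μ', r ∈ Icc a b → ⟪ζ' r, z r⟫ ≤ ‖ζ' r‖ / (2 * η) * ‖z r‖ ^ 2)
    (hz : ∀ t ∈ Icc a b, z t = z a + (∫ r in a..t, ζ r ∂μ) + ∫ r in a..t, ζ' r ∂μ')
    {x y : ℝ} (hax : a ≤ x) (hxy : x ≤ y) (hyb : y ≤ b) (hzx : z x = 0)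
    (hV : (∫ r in x..y, ‖ζ r‖ ∂μ) + ∫ r in x..y, ‖ζ' r‖ ∂μ' ≤ η / 2) :
    EqOn z 0 (Icc x y) := by
  have hxI : x ∈ Icc a b := ⟨hax, hxy.trans hyb⟩
  have hyI : y ∈ Icc a b := ⟨hax.trans hxy, hyb⟩
  obtain ⟨t₀, ht₀, hmax⟩ := isCompact_Icc.exists_isMaxOn (nonempty_Icc.mpr hxy)
    ((hzc.mono (Icc_subset_Icc hax hyb)).norm.pow 2)
  set M := ‖z t₀‖ ^ 2
  have hM : ∀ r ∈ Icc x y, ‖z r‖ ^ 2 ≤ M := fun r hr => hmax hr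
  have hM0 : 0 ≤ M := by positivity
  have ht₀I : t₀ ∈ Icc a b := ⟨hax.trans ht₀.1, ht₀.2.trans hyb⟩
  have h₁ := intervalIntegral_mul_le_mul_intervalIntegral ht₀.1 ht₀.2
    ((integrableOn_sq_norm_mul_norm hzc hζ).intervalIntegrable_of_mem_Icc hxI ht₀I)
    (IntegrableOn.intervalIntegrable_of_mem_Icc hζ.norm hxI hyI) (fun r => norm_nonneg (ζ r)) hM0 hM
  have h₂ := intervalIntegral_mul_le_mul_intervalIntegral ht₀.1 ht₀.2
    ((integrableOn_sq_norm_mul_norm hzc hζ').intervalIntegrable_of_mem_Icc hxI ht₀I)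
    (IntegrableOn.intervalIntegrable_of_mem_Icc hζ'.norm hxI hyI) (fun r => norm_nonneg (ζ' r))
    hM0 hM
  have hM_le : M ≤ M / 2 := calc
    M = ‖z t₀‖ ^ 2 - ‖z x‖ ^ 2 := by rw [hzx, norm_zero]; ring
    _ ≤ ((∫ r in x..t₀, ‖z r‖ ^ 2 * ‖ζ r‖ ∂μ) + ∫ r in x..t₀, ‖z r‖ ^ 2 * ‖ζ' r‖ ∂μ') / η :=
        sq_norm_sub_sq_norm_le hzc hζ hζ' hmono hmono' hz hax ht₀.1 ht₀I.2
    _ ≤ M * ((∫ r in x..y, ‖ζ r‖ ∂μ) + ∫ r in x..y, ‖ζ' r‖ ∂μ') / η := by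
        rw [mul_add]; gcongr
    _ ≤ M * (η / 2) / η := by gcongr
    _ = M / 2 := by field_simp
  intro r hr
  have : ‖z r‖ ^ 2 ≤ 0 := (hM r hr).trans (by linarith)
  simpa using this

theorem eqOn_zero_of_eq_zero_left (hη : 0 < η) (hzc : ContinuousOn z (Icc a b))
    (hζ : IntegrableOn ζ (Icc a b) μ) (hζ' : IntegrableOn ζ' (Icc a b) μ')
    (hmono : ∀ᵐ r ∂μ, r ∈ Icc a b → ⟪ζ r, z r⟫ ≤ ‖ζ r‖ / (2 * η) * ‖z r‖ ^ 2)
    (hmono' : ∀ᵐ r ∂μ', r ∈ Icc a b → ⟪ζ' r, z r⟫ ≤ ‖ζ' r‖ / (2 * η) * ‖z r‖ ^ 2)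
    (hz : ∀ t ∈ Icc a b, z t = z a + (∫ r in a..t, ζ r ∂μ) + ∫ r in a..t, ζ' r ∂μ')
    (hza : z a = 0) :
    EqOn z 0 (Icc a b) := by
  refine IsClosed.Icc_subset_of_forall_mem_nhdsWithin (s := {t | z t = 0}) ?_ hza ?_
  · rw [inter_comm]
    exact hzc.preimage_isClosed_of_isClosed isClosed_Icc isClosed_singleton
  rintro x ⟨hzx, hax, hxb⟩
  have hsub : Ioc x b ⊆ Icc a b := Ioc_subset_Icc_self.trans (Icc_subset_Icc_left hax)
  have hV := (tendsto_intervalIntegral_shrink hxb.le (IntegrableOn.mono_set hζ.norm hsub)).add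
    (tendsto_intervalIntegral_shrink hxb.le (IntegrableOn.mono_set hζ'.norm hsub))
  rw [add_zero] at hV
  obtain ⟨n, hn⟩ := (hV.eventually (Iic_mem_nhds (by positivity : (0 : ℝ) < η / 2))).exists
  have hstep : 0 < (b - x) / (n + 1) := div_pos (sub_pos.mpr hxb) (by positivity)
  have hyb : x + (b - x) / (n + 1) ≤ b := by
    have : (b - x) / (n + 1) ≤ b - x := div_le_self (sub_pos.mpr hxb).le (by simp)
    linarith
  exact mem_of_superset (Icc_mem_nhdsGT (lt_add_of_pos_right x hstep))
    (eqOn_zero_of_intervalIntegral_norm_le hη hzc hζ hζ' hmono hmono' hz hax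
      (le_add_of_nonneg_right hstep.le) hyb hzx hn)

end

theorem difference_of_reflected_vanishes_general {d : ℕ} (η T : ℝ) (hη : 0 < η)
    (C : ℝ → Set (EuclideanSpace ℝ (Fin d)))
    (hreg : ∀ t ∈ Set.Icc 0 T, IsClosed (C t) ∧ IsProxRegular η (C t))
    (μ μ' : Measure ℝ)
    (ξ ξ' : ℝ → EuclideanSpace ℝ (Fin d))
    (hξ : Integrable ξ μ) (hξ' : Integrable ξ' μ')
    (x x' : ℝ → EuclideanSpace ℝ (Fin d))
    (hx : ∀ t ∈ Set.Icc 0 T, x t ∈ C t) (hx' : ∀ t ∈ Set.Icc 0 T, x' t ∈ C t)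
    (hxc : ContinuousOn x (Set.Icc 0 T)) (hx'c : ContinuousOn x' (Set.Icc 0 T))
    (hcone : ∀ᵐ s ∂μ, ξ s ∈ proxNormalCone (C s) (x s))
    (hcone' : ∀ᵐ s ∂μ', ξ' s ∈ proxNormalCone (C s) (x' s))
    (z : ℝ → EuclideanSpace ℝ (Fin d)) (hzdef : ∀ t, z t = x t - x' t)
    (hz0 : z 0 = 0)
    (hz : ∀ t ∈ Set.Icc 0 T,
      z t = -(∫ s in Set.Icc 0 t, ξ s ∂μ) + ∫ s in Set.Icc 0 t, ξ' s ∂μ') :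
    (∀ t ∈ Set.Icc 0 T,
      ‖z t‖ ^ 2 ≤ ∫ s in Set.Icc 0 t, ‖z s‖ ^ 2 / (2 * η) ∂(μ + μ')) ∧
    ∀ t ∈ Set.Icc 0 T, z t = 0 := by
  have hzc : ContinuousOn z (Icc 0 T) := (hxc.sub hx'c).congr fun t _ => hzdef t
  have hdrive : ∀ t ∈ Icc 0 T,
      z t = z 0 + (∫ r in 0..t, -ξ r ∂μ) + ∫ r in 0..t, ξ' r ∂μ' := fun t ht => by
    rw [hz t ht, hz 0 ⟨le_rfl, ht.1.trans ht.2⟩, intervalIntegral.integral_neg,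
      ← setIntegral_Icc_sub_setIntegral_Icc hξ.integrableOn le_rfl ht.1,
      ← setIntegral_Icc_sub_setIntegral_Icc hξ'.integrableOn le_rfl ht.1]
    abel
  have hmono : ∀ᵐ r ∂μ, r ∈ Icc 0 T → ⟪-ξ r, z r⟫ ≤ ‖-ξ r‖ / (2 * η) * ‖z r‖ ^ 2 := by
    filter_upwards [hcone] with r hr hrI
    have := inner_le_of_mem_proxNormalCone hη (hreg r hrI).2 (hx r hrI) (hx' r hrI) hr
    rwa [← neg_sub, ← hzdef, inner_neg_right, ← inner_neg_left, norm_neg, ← norm_neg (ξ r)] at this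
  have hmono' : ∀ᵐ r ∂μ', r ∈ Icc 0 T → ⟪ξ' r, z r⟫ ≤ ‖ξ' r‖ / (2 * η) * ‖z r‖ ^ 2 := by
    filter_upwards [hcone'] with r hr hrI
    simpa only [← hzdef] using
      inner_le_of_mem_proxNormalCone hη (hreg r hrI).2 (hx' r hrI) (hx r hrI) hr
  have hvanish := eqOn_zero_of_eq_zero_left hη hzc hξ.neg.integrableOn hξ'.integrableOn
    hmono hmono' hdrive hz0
  refine ⟨fun t ht => ?_, hvanish⟩
  rw [hvanish ht, Pi.zero_apply, norm_zero, zero_pow two_ne_zero]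
  exact integral_nonneg fun s => by positivity

/-- Energy inequality and vanishing for the difference of two reflected trajectories:
if dz = -dk + dk̃ with dk(t) ∈ N(C(t),x(t)), dk̃(t) ∈ N(C(t),x̃(t)), z = x - x̃, z(0) = 0,
and each C(t) is η-prox-regular, then e = |z|² satisfies the integrated Gronwall inequality
e(t) ≤ ∫_{[0,t]} e/(2η) d(|k|+|k̃|) and hence e ≡ 0. -/
theorem difference_of_reflected_vanishes {d : ℕ} (η T : ℝ) (hη : 0 < η) (hT : 0 ≤ T)
    (C : ℝ → Set (EuclideanSpace ℝ (Fin d)))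
    (hreg : ∀ t ∈ Set.Icc 0 T, IsClosed (C t) ∧ IsProxRegular η (C t))
    (μ μ' : Measure ℝ) [IsFiniteMeasure μ] [IsFiniteMeasure μ']
    (hsupp : μ (Set.Icc 0 T)ᶜ = 0) (hsupp' : μ' (Set.Icc 0 T)ᶜ = 0)
    (ξ ξ' : ℝ → EuclideanSpace ℝ (Fin d))
    (hξ : Integrable ξ μ) (hξ' : Integrable ξ' μ')
    (x x' : ℝ → EuclideanSpace ℝ (Fin d))
    (hx : ∀ t ∈ Set.Icc 0 T, x t ∈ C t) (hx' : ∀ t ∈ Set.Icc 0 T, x' t ∈ C t)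
    (hxc : ContinuousOn x (Set.Icc 0 T)) (hx'c : ContinuousOn x' (Set.Icc 0 T))
    (hcone : ∀ᵐ s ∂μ, ξ s ∈ proxNormalCone (C s) (x s))
    (hcone' : ∀ᵐ s ∂μ', ξ' s ∈ proxNormalCone (C s) (x' s))
    (hcont : ContinuousOn
      (fun t => (μ (Set.Icc 0 t)).toReal + (μ' (Set.Icc 0 t)).toReal) (Set.Icc 0 T))
    (z : ℝ → EuclideanSpace ℝ (Fin d)) (hzdef : ∀ t, z t = x t - x' t)
    (hz0 : z 0 = 0)
    (hz : ∀ t ∈ Set.Icc 0 T,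
      z t = -(∫ s in Set.Icc 0 t, ξ s ∂μ) + ∫ s in Set.Icc 0 t, ξ' s ∂μ') :
    (∀ t ∈ Set.Icc 0 T,
      ‖z t‖ ^ 2 ≤ ∫ s in Set.Icc 0 t, ‖z s‖ ^ 2 / (2 * η) ∂(μ + μ')) ∧
    ∀ t ∈ Set.Icc 0 T, z t = 0 :=
  difference_of_reflected_vanishes_general η T hη C hreg μ μ' ξ ξ' hξ hξ' x x' hx hx' hxc hx'c hcone
    hcone' z hzdef hz0 hz
end

section
/- Under assumptions (A0)–(A4) and the reverse triangle inequality (R_ρ), for all t ∈ I and x ∈ Q(t), the element a_i + b_i decomposition of ∇_x g_i(t,x) onto the cone N_ρ(Q(t),x) and its polar satisfies α/γ ≤ |b_i| ≤ β, and moreover 2⟨b_i, -∇_x g_i(t,x)⟩ ≤ -α²/γ². -/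
open scoped RealInnerProductSpace

/-- The cone generated by the opposites of the active gradients. -/
def gradCone {d : ℕ} {ι : Type*} [Fintype ι] (G : ι → EuclideanSpace ℝ (Fin d)) :
    Set (EuclideanSpace ℝ (Fin d)) :=
  {v | ∃ lam : ι → ℝ, (∀ i, 0 ≤ lam i) ∧ v = -∑ i, lam i • G i}

/-- The polar cone of a set. -/
def polarCone {d : ℕ} (K : Set (EuclideanSpace ℝ (Fin d))) :
    Set (EuclideanSpace ℝ (Fin d)) :=
  {w | ∀ v ∈ K, ⟪v, w⟫ ≤ 0}

/-!
Since `a i = -∑ λⱼ Gⱼ` with `λ ≥ 0`, the polar component `b i = G i - a i` is again a nonnegative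
combination `∑ μⱼ Gⱼ` whose `i`-th coefficient is at least `1`. The reverse triangle inequality
then gives `α ≤ ‖G i‖ ≤ ∑ μⱼ ‖Gⱼ‖ ≤ γ ‖b i‖`. The upper bound `‖b i‖ ≤ ‖G i‖ ≤ β` and the identity
`⟪b i, G i⟫ = ‖b i‖²` both come from the orthogonality of `a i` and `b i`.
-/

section Orthogonal

variable {E : Type*} [NormedAddCommGroup E] [InnerProductSpace ℝ E] {a b : E}

theorem norm_right_le_norm_add_of_inner_eq_zero (h : ⟪a, b⟫ = 0) : ‖b‖ ≤ ‖a + b‖ := by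
  have hpyth := norm_add_sq_eq_norm_sq_add_norm_sq_real h
  nlinarith [norm_nonneg b, norm_nonneg (a + b), mul_self_nonneg ‖a‖]

theorem inner_right_add_eq_norm_sq_of_inner_eq_zero (h : ⟪a, b⟫ = 0) :
    ⟪b, a + b⟫ = ‖b‖ ^ 2 := by
  rw [inner_add_right, real_inner_comm, h, real_inner_self_eq_norm_sq, zero_add]

end Orthogonal

theorem exists_sum_eq_sub_of_mem_gradCone {d : ℕ} {ι : Type*} [Fintype ι] [DecidableEq ι]
    {G : ι → EuclideanSpace ℝ (Fin d)} {a : EuclideanSpace ℝ (Fin d)} (ha : a ∈ gradCone G)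
    (i : ι) : ∃ μ : ι → ℝ, (∀ j, 0 ≤ μ j) ∧ 1 ≤ μ i ∧ G i - a = ∑ j, μ j • G j := by
  obtain ⟨lam, hlam, rfl⟩ := ha
  refine ⟨lam + Pi.single i 1, fun j => add_nonneg (hlam j) ?_, by simpa using hlam i, ?_⟩
  · rw [Pi.single_apply]
    split_ifs <;> norm_num
  · simp only [Pi.add_apply, add_smul, Finset.sum_add_distrib, Pi.single_apply, ite_smul,
      one_smul, zero_smul, Finset.sum_ite_eq', Finset.mem_univ, if_true, sub_neg_eq_add]
    abel

theorem norm_le_mul_norm_sum_of_one_le_coeff {E : Type*} [NormedAddCommGroup E] {ι : Type*}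
    [Fintype ι] [NormedSpace ℝ E] {G : ι → E} {γ : ℝ}
    (hR : ∀ lam : ι → ℝ, (∀ i, 0 ≤ lam i) → ∑ i, lam i * ‖G i‖ ≤ γ * ‖∑ i, lam i • G i‖)
    {μ : ι → ℝ} (hμ : ∀ j, 0 ≤ μ j) {i : ι} (hμi : 1 ≤ μ i) :
    ‖G i‖ ≤ γ * ‖∑ j, μ j • G j‖ :=
  calc ‖G i‖ ≤ μ i * ‖G i‖ := le_mul_of_one_le_left (norm_nonneg _) hμi
    _ ≤ ∑ j, μ j * ‖G j‖ :=
      Finset.single_le_sum (f := fun j => μ j * ‖G j‖)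
        (fun j _ => mul_nonneg (hμ j) (norm_nonneg _)) (Finset.mem_univ i)
    _ ≤ γ * ‖∑ j, μ j • G j‖ := hR μ hμ

theorem moreau_decomposition_bounds_general {d : ℕ} {ι : Type*} [Fintype ι]
    (α β γ : ℝ) (hα : 0 < α) (hγ : 0 < γ)
    (G : ι → EuclideanSpace ℝ (Fin d))
    (hA1 : ∀ i, α ≤ ‖G i‖ ∧ ‖G i‖ ≤ β)
    (hR : ∀ lam : ι → ℝ, (∀ i, 0 ≤ lam i) →
      ∑ i, lam i * ‖G i‖ ≤ γ * ‖∑ i, lam i • G i‖)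
    (a b : ι → EuclideanSpace ℝ (Fin d))
    (ha : ∀ i, a i ∈ gradCone G)
    (hdecomp : ∀ i, G i = a i + b i) (horth : ∀ i, ⟪a i, b i⟫ = 0) :
    ∀ i, α / γ ≤ ‖b i‖ ∧ ‖b i‖ ≤ β ∧ 2 * ⟪b i, -(G i)⟫ ≤ -(α ^ 2 / γ ^ 2) := by
  classical
  intro i
  obtain ⟨μ, hμ, hμi, hbμ⟩ := exists_sum_eq_sub_of_mem_gradCone (ha i) i
  have hb : b i = G i - a i := by rw [hdecomp i, add_sub_cancel_left]
  have hlower : α / γ ≤ ‖b i‖ := by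
    rw [div_le_iff₀' hγ, hb, hbμ]
    exact (hA1 i).1.trans (norm_le_mul_norm_sum_of_one_le_coeff hR hμ hμi)
  have hupper : ‖b i‖ ≤ β :=
    (norm_right_le_norm_add_of_inner_eq_zero (horth i)).trans (hdecomp i ▸ (hA1 i).2)
  have hinner : ⟪b i, G i⟫ = ‖b i‖ ^ 2 := by
    rw [hdecomp i, inner_right_add_eq_norm_sq_of_inner_eq_zero (horth i)]
  have hsq : (α / γ) ^ 2 ≤ ‖b i‖ ^ 2 := pow_le_pow_left₀ (div_pos hα hγ).le hlower 2
  refine ⟨hlower, hupper, ?_⟩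
  rw [inner_neg_right, hinner, ← div_pow]
  nlinarith

/-- Under (A1) and the reverse triangle inequality (R_ρ), the Moreau decomposition
∇g_i = a_i + b_i onto N_ρ and its polar satisfies α/γ ≤ |b_i| ≤ β and
2⟨b_i, -∇g_i⟩ ≤ -α²/γ². -/
theorem moreau_decomposition_bounds {d : ℕ} {ι : Type*} [Fintype ι]
    (α β γ : ℝ) (hα : 0 < α) (hβ : 0 < β) (hγ : 0 < γ)
    (G : ι → EuclideanSpace ℝ (Fin d))
    (hA1 : ∀ i, α ≤ ‖G i‖ ∧ ‖G i‖ ≤ β)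
    (hR : ∀ lam : ι → ℝ, (∀ i, 0 ≤ lam i) →
      ∑ i, lam i * ‖G i‖ ≤ γ * ‖∑ i, lam i • G i‖)
    (a b : ι → EuclideanSpace ℝ (Fin d))
    (ha : ∀ i, a i ∈ gradCone G) (hb : ∀ i, b i ∈ polarCone (gradCone G))
    (hdecomp : ∀ i, G i = a i + b i) (horth : ∀ i, ⟪a i, b i⟫ = 0) :
    ∀ i, α / γ ≤ ‖b i‖ ∧ ‖b i‖ ≤ β ∧ 2 * ⟪b i, -(G i)⟫ ≤ -(α ^ 2 / γ ^ 2) :=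
  moreau_decomposition_bounds_general α β γ hα hγ G hA1 hR a b ha hdecomp horth
end

section
/- For x ∈ Q(t), a unit vector u with ⟨∇_x g_i(t,x), u⟩ ≥ ν for all i ∈ I_ρ(t,x), and h < ρ/(β+ν), every constraint satisfies g_i(t, x + h u) ≥ h ν. -/
/-!
Convexity puts the graph of `g i` above its tangent plane at `x`, so
`g i (x + h • u) ≥ g i x + h ⟪G i, u⟫`. For a nearly active constraint (`g i x ≤ ρ`) the
good direction gives `⟪G i, u⟫ ≥ ν` and `g i x ≥ 0`. For an inactive one, Cauchy–Schwarz
gives `⟪G i, u⟫ ≥ -β`, and the step size makes `h (β + ν)` smaller than the slack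
`g i x > ρ`.
-/

open scoped RealInnerProductSpace

open Set

theorem ConvexOn.add_inner_le_of_hasGradientAt {E : Type*} [NormedAddCommGroup E]
    [InnerProductSpace ℝ E] [CompleteSpace E] {s : Set E} {f : E → ℝ} {f' x y : E}
    (hf : ConvexOn ℝ s f) (hx : x ∈ s) (hy : y ∈ s) (hgrad : HasGradientAt f f' x) :
    f x + ⟪f', y - x⟫ ≤ f y := by
  have hline : ConvexOn ℝ (AffineMap.lineMap x y ⁻¹' s) (f ∘ AffineMap.lineMap x y) :=
    hf.comp_affineMap _
  have hderiv : HasDerivAt (f ∘ AffineMap.lineMap x y) ⟪f', y - x⟫ (0 : ℝ) := by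
    have hf' : HasFDerivAt f (InnerProductSpace.toDual ℝ E f')
        (AffineMap.lineMap x y (0 : ℝ)) := by
      simpa using hgrad.hasFDerivAt
    simpa using hf'.comp_hasDerivAt (0 : ℝ) AffineMap.hasDerivAt_lineMap
  have := hline.le_slope_of_hasDerivAt (by simpa using hx) (by simpa using hy) zero_lt_one hderiv
  simp only [slope_def_field, Function.comp_apply, AffineMap.lineMap_apply_one,
    AffineMap.lineMap_apply_zero, sub_zero, div_one] at this
  linarith

theorem neg_le_inner_of_norm_le {E : Type*} [NormedAddCommGroup E] [InnerProductSpace ℝ E]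
    {a u : E} {β : ℝ} (ha : ‖a‖ ≤ β) (hu : ‖u‖ = 1) : -β ≤ ⟪a, u⟫ := by
  have := neg_le_of_abs_le (abs_real_inner_le_norm a u)
  rw [hu, mul_one] at this
  linarith

theorem good_direction_step_general {d p : ℕ} (ρ β ν h : ℝ)
    (hh0 : 0 ≤ h) (hh : h < ρ / (β + ν))
    (g : Fin p → EuclideanSpace ℝ (Fin d) → ℝ)
    (G : Fin p → EuclideanSpace ℝ (Fin d))
    (x u : EuclideanSpace ℝ (Fin d)) (hu : ‖u‖ = 1)
    (hconv : ∀ i, ConvexOn ℝ Set.univ (g i))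
    (hgrad : ∀ i, HasGradientAt (g i) (G i) x)
    (hGb : ∀ i, ‖G i‖ ≤ β)
    (hx : ∀ i, 0 ≤ g i x)
    (hgood : ∀ i, g i x ≤ ρ → ν ≤ ⟪G i, u⟫) :
    ∀ i, h * ν ≤ g i (x + h • u) := by
  intro i
  have htangent : g i x + h * ⟪G i, u⟫ ≤ g i (x + h • u) := by
    simpa [real_inner_smul_right] using
      (hconv i).add_inner_le_of_hasGradientAt (mem_univ x) (mem_univ (x + h • u)) (hgrad i)
  by_cases hactive : g i x ≤ ρ
  · have := mul_le_mul_of_nonneg_left (hgood i hactive) hh0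
    linarith [hx i]
  · have hlow := mul_le_mul_of_nonneg_left (neg_le_inner_of_norm_le (hGb i) hu) hh0
    have hslack : h * (β + ν) ≤ g i x := by
      rcases lt_or_ge 0 (β + ν) with hpos | hnonpos
      · linarith [(lt_div_iff₀ hpos).mp hh]
      · linarith [mul_nonpos_of_nonneg_of_nonpos hh0 hnonpos, hx i]
    linarith

/-- Moving a feasible point by h in the good direction u makes every constraint at least hν,
provided h < ρ/(β+ν). -/
theorem good_direction_step {d p : ℕ} (ρ β ν h : ℝ)
    (hρ : 0 < ρ) (hβ : 0 < β) (hν : 0 < ν) (hh0 : 0 ≤ h) (hh : h < ρ / (β + ν))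
    (g : Fin p → EuclideanSpace ℝ (Fin d) → ℝ)
    (G : Fin p → EuclideanSpace ℝ (Fin d))
    (x u : EuclideanSpace ℝ (Fin d)) (hu : ‖u‖ = 1)
    (hconv : ∀ i, ConvexOn ℝ Set.univ (g i))
    (hgrad : ∀ i, HasGradientAt (g i) (G i) x)
    (hGb : ∀ i, ‖G i‖ ≤ β)
    (hx : ∀ i, 0 ≤ g i x)
    (hgood : ∀ i, g i x ≤ ρ → ν ≤ ⟪G i, u⟫) :
    ∀ i, h * ν ≤ g i (x + h • u) :=
  good_direction_step_general ρ β ν h hh0 hh g G x u hu hconv hgrad hGb hx hgood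
end
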